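/- arXiv:2502.15862 — 2 statements merged into one kernel-verified Lean document; each statement's English description precedes it below -/
import Mathlib

section
/- Suppose A ∈ C¹([0,∞)) ∩ C^∞((0,∞)) with A(0)=A'(0)=0, A' > 0 on (0,∞), and Ψ(u) = ∫₀ᵘ A'(r)/r dr is finite for all u > 0. Suppose uA''(u)·Ψ(u) ≥ [A'(u)]² for all u > 0. Define B(v) = A'(Ψ⁻¹(v)). Then v ↦ B(v)/v is nondecreasing on (0,∞). -/
open Set Real

/-- If A ∈ C¹([0,∞)) ∩ C^∞((0,∞)), A(0)=A'(0)=0, A'>0 on (0,∞),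
Ψ(u)=∫₀ᵘ A'(r)/r dr is finite for u>0, and uA''(u)·Ψ(u) ≥ (A'(u))² for u>0,
then v ↦ B(v)/v is nondecreasing on (0,∞), where B(v) = A'(Ψ⁻¹(v)). -/
theorem stmt5 (A : ℝ → ℝ) (Ψ ψ : ℝ → ℝ)
    (hA1 : ContDiffOn ℝ 1 A (Ici 0))
    (hAinf : ContDiffOn ℝ (⊤ : ℕ∞) A (Ioi 0))
    (hA0 : A 0 = 0) (hA'0 : deriv A 0 = 0)
    (hA' : ∀ u > (0:ℝ), 0 < deriv A u)
    (hΨfin : ∀ u > (0:ℝ), IntervalIntegrable (fun r => deriv A r / r) MeasureTheory.volume 0 u)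
    (hΨ : ∀ u, Ψ u = ∫ r in (0:ℝ)..u, deriv A r / r)
    (hψΨ : ∀ u > (0:ℝ), ψ (Ψ u) = u)
    (hΨψ : ∀ v > (0:ℝ), Ψ (ψ v) = v)
    (hψpos : ∀ v > (0:ℝ), 0 < ψ v)
    (hH : ∀ u > (0:ℝ), u * deriv (deriv A) u * Ψ u ≥ (deriv A u) ^ 2) :
    MonotoneOn (fun v => deriv A (ψ v) / v) (Ioi 0) := by
  have hopen : IsOpen (Ioi (0:ℝ)) := isOpen_Ioi
  have hA'cd : ContDiffOn ℝ (⊤ : ℕ∞) (deriv A) (Ioi 0) := hAinf.deriv_of_isOpen hopen (by simp)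
  have hA'cont : ContinuousOn (deriv A) (Ioi 0) := hA'cd.continuousOn
  have hfcont : ContinuousOn (fun r => deriv A r / r) (Ioi 0) :=
    hA'cont.div continuousOn_id (fun x hx => ne_of_gt hx)
  -- derivative of Ψ
  have hΨderiv : ∀ u ∈ Ioi (0:ℝ), HasDerivAt Ψ (deriv A u / u) u := by
    intro u hu
    have hΨeq : Ψ = fun x => ∫ r in (0:ℝ)..x, deriv A r / r := funext hΨ
    rw [hΨeq]
    exact intervalIntegral.integral_hasDerivAt_right (hΨfin u hu)
      (hfcont.stronglyMeasurableAtFilter hopen u hu)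
      (hfcont.continuousAt (hopen.mem_nhds hu))
  -- positivity of Ψ
  have hΨpos : ∀ u ∈ Ioi (0:ℝ), 0 < Ψ u := by
    intro u hu
    rw [hΨ u]
    exact intervalIntegral.intervalIntegral_pos_of_pos_on (hΨfin u hu)
      (fun x hx => div_pos (hA' x hx.1) hx.1) hu
  -- Ψ strictly monotone on (0,∞)
  have hΨsm : StrictMonoOn Ψ (Ioi 0) := by
    apply strictMonoOn_of_deriv_pos (convex_Ioi 0)
    · exact fun u hu => ((hΨderiv u hu).differentiableAt.continuousAt).continuousWithinAt
    · intro u hu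
      rw [interior_Ioi] at hu
      rw [(hΨderiv u hu).deriv]
      exact div_pos (hA' u hu) hu
  -- A' has derivative A'' at points of (0,∞)
  have hA''d : ∀ u ∈ Ioi (0:ℝ), HasDerivAt (deriv A) (deriv (deriv A) u) u := by
    intro u hu
    exact ((hA'cd.differentiableOn (by simp)).differentiableAt (hopen.mem_nhds hu)).hasDerivAt
  -- g = A'/Ψ has nonnegative derivative on (0,∞)
  have hgderiv : ∀ u ∈ Ioi (0:ℝ), HasDerivAt (fun x => deriv A x / Ψ x)
      ((deriv (deriv A) u * Ψ u - deriv A u * (deriv A u / u)) / (Ψ u) ^ 2) u := by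
    intro u hu
    exact (hA''d u hu).div (hΨderiv u hu) (ne_of_gt (hΨpos u hu))
  have hgnonneg : ∀ u ∈ Ioi (0:ℝ),
      0 ≤ (deriv (deriv A) u * Ψ u - deriv A u * (deriv A u / u)) / (Ψ u) ^ 2 := by
    intro u hu
    apply div_nonneg _ (sq_nonneg _)
    rw [sub_nonneg]
    calc deriv A u * (deriv A u / u) = (deriv A u) ^ 2 / u := by ring
      _ ≤ deriv (deriv A) u * Ψ u := by
          rw [div_le_iff₀ hu]
          have h := hH u hu
          nlinarith [h]
  -- g monotone on (0,∞)
  have hgmono : MonotoneOn (fun x => deriv A x / Ψ x) (Ioi 0) := by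
    apply monotoneOn_of_deriv_nonneg (convex_Ioi 0)
    · exact fun u hu => ((hgderiv u hu).differentiableAt.continuousAt).continuousWithinAt
    · rw [interior_Ioi]
      exact fun u hu => (hgderiv u hu).differentiableAt.differentiableWithinAt
    · intro u hu
      rw [interior_Ioi] at hu
      rw [(hgderiv u hu).deriv]
      exact hgnonneg u hu
  -- conclude
  intro v₁ hv₁ v₂ hv₂ h12
  have hu₁ : ψ v₁ ∈ Ioi (0:ℝ) := hψpos v₁ hv₁
  have hu₂ : ψ v₂ ∈ Ioi (0:ℝ) := hψpos v₂ hv₂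
  have hu12 : ψ v₁ ≤ ψ v₂ := by
    by_contra h
    push_neg at h
    have := hΨsm hu₂ hu₁ h
    rw [hΨψ v₁ hv₁, hΨψ v₂ hv₂] at this
    exact absurd h12 (not_le.mpr this)
  have := hgmono hu₁ hu₂ hu12
  simpa only [hΨψ v₁ hv₁, hΨψ v₂ hv₂] using this
end

section
/- There is no traveling sharp wave for the pure degenerate diffusion equation u_t = [A(u)]_{xx}: precisely, suppose A ∈ 𝒜, c₀ > 0, p > 0, and φ₀ ∈ C((-∞,0]) is positive and C² on (-∞,0) with φ₀(-∞) = p, φ₀'(-∞) = 0, φ₀(0) = 0, satisfying [A(φ₀)]''(z) + c₀φ₀'(z) = 0 for z < 0, and A'(φ₀(z))φ₀'(z)/φ₀(z) → −c₀ as z → 0⁻ (Darcy's law, i.e. [Ψ(φ₀)]'(0−) = −c₀). Then a contradiction follows; no such φ₀ exists. -/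
open Set Filter Real

/-- There is no traveling sharp wave for the pure degenerate diffusion
equation u_t = [A(u)]_{xx}: no profile φ₀ > 0 on (−∞,0) with φ₀(−∞)=p>0, φ₀'(−∞)=0,
φ₀(0)=0 can satisfy [A(φ₀)]'' + c₀φ₀' = 0 on (−∞,0) together with the Darcy law
A'(φ₀(z))φ₀'(z)/φ₀(z) → −c₀ as z → 0⁻, when c₀ > 0. -/
theorem stmt9 (A : ℝ → ℝ) (φ : ℝ → ℝ) (c₀ p : ℝ)
    (hA1 : ContDiffOn ℝ 1 A (Ici 0))
    (hAinf : ContDiffOn ℝ (⊤ : ℕ∞) A (Ioi 0))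
    (hA0 : A 0 = 0) (hA'0 : deriv A 0 = 0)
    (hA' : ∀ r > (0:ℝ), 0 < deriv A r)
    (hint : IntervalIntegrable (fun r => deriv A r / r) MeasureTheory.volume 0 1)
    (hc₀ : 0 < c₀) (hp : 0 < p)
    (hφcont : ContinuousOn φ (Iic 0))
    (hφC2 : ContDiffOn ℝ 2 φ (Iio 0))
    (hφpos : ∀ z < (0:ℝ), 0 < φ z)
    (hφ0 : φ 0 = 0)
    (hφlim : Tendsto φ atBot (nhds p))
    (hφ'lim : Tendsto (deriv φ) atBot (nhds 0))
    (hODE : ∀ z < (0:ℝ), deriv (deriv (fun y => A (φ y))) z + c₀ * deriv φ z = 0)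
    (hDarcy : Tendsto (fun z => deriv A (φ z) * deriv φ z / φ z)
      (nhdsWithin 0 (Iio 0)) (nhds (-c₀))) :
    False := by
  set B : ℝ → ℝ := fun y => A (φ y) with hBdef
  have hmaps : MapsTo φ (Iio 0) (Ioi 0) := fun z hz => hφpos z hz
  -- B is C² on Iio 0
  have hBC2 : ContDiffOn ℝ 2 B (Iio 0) := (hAinf.of_le (WithTop.coe_le_coe.mpr (le_top : (2:ℕ∞) ≤ ⊤))).comp hφC2 hmaps
  have hB'C1 : ContDiffOn ℝ 1 (deriv B) (Iio 0) :=
    hBC2.deriv_of_isOpen isOpen_Iio (by norm_num)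
  have hB'diff : DifferentiableOn ℝ (deriv B) (Iio 0) := hB'C1.differentiableOn one_ne_zero
  have hφdiff : DifferentiableOn ℝ φ (Iio 0) := hφC2.differentiableOn (by norm_num)
  -- the function g := (A∘φ)' + c₀ φ is constant on Iio 0
  set g : ℝ → ℝ := fun z => deriv B z + c₀ * φ z with hgdef
  have hgdiff : DifferentiableOn ℝ g (Iio 0) :=
    hB'diff.add (hφdiff.const_mul c₀)
  have hgderiv : ∀ z ∈ Iio 0, HasDerivAt g 0 z := by
    intro z hz
    have h1 : HasDerivAt (deriv B) (deriv (deriv B) z) z :=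
      ((hB'diff z hz).differentiableAt (isOpen_Iio.mem_nhds hz)).hasDerivAt
    have h2 : HasDerivAt φ (deriv φ z) z :=
      ((hφdiff z hz).differentiableAt (isOpen_Iio.mem_nhds hz)).hasDerivAt
    have := h1.add (h2.const_mul c₀)
    have hzero : deriv (deriv B) z + c₀ * deriv φ z = 0 := hODE z hz
    rw [hzero] at this
    exact this
  have hconst : ∀ z ∈ Iio 0, g z = g (-1) := by
    intro z hz
    refine (convex_Iio (0:ℝ)).is_const_of_fderivWithin_eq_zero hgdiff ?_ hz
      (by norm_num : (-1:ℝ) ∈ Iio (0:ℝ))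
    intro x hx
    rw [fderivWithin_of_isOpen isOpen_Iio hx, (hgderiv x hx).hasFDerivAt.fderiv]
    ext t
    simp
  set K : ℝ := g (-1) with hKdef
  -- chain rule on Iio 0
  have hchain : ∀ z ∈ Iio 0, deriv B z = deriv A (φ z) * deriv φ z := by
    intro z hz
    have h2 : HasDerivAt φ (deriv φ z) z :=
      ((hφdiff z hz).differentiableAt (isOpen_Iio.mem_nhds hz)).hasDerivAt
    have hAdiff : DifferentiableOn ℝ A (Ioi 0) := hAinf.differentiableOn (by simp)
    have h1 : HasDerivAt A (deriv A (φ z)) (φ z) :=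
      ((hAdiff (φ z) (hφpos z hz)).differentiableAt
        (isOpen_Ioi.mem_nhds (hφpos z hz))).hasDerivAt
    exact (h1.comp z h2).deriv
  -- limit at -∞ : g → c₀ p
  have hev : ∀ᶠ z in (atBot : Filter ℝ), z ∈ Iio (0:ℝ) := eventually_lt_atBot 0
  have hφIoi : Tendsto φ atBot (nhdsWithin p (Ioi 0)) := by
    rw [tendsto_nhdsWithin_iff]
    exact ⟨hφlim, hev.mono fun z hz => hφpos z hz⟩
  have hA'cont : ContinuousWithinAt (deriv A) (Ioi 0) p :=
    (hAinf.continuousOn_deriv_of_isOpen isOpen_Ioi (by simp)).continuousWithinAt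
      (mem_Ioi.mpr hp)
  have hA'tend : Tendsto (fun z => deriv A (φ z)) atBot (nhds (deriv A p)) :=
    hA'cont.tendsto.comp hφIoi
  have htend_bot : Tendsto g atBot (nhds (c₀ * p)) := by
    have h := (hA'tend.mul hφ'lim).add (hφlim.const_mul c₀)
    rw [mul_zero, zero_add] at h
    refine h.congr' ?_
    filter_upwards [hev] with z hz
    simp only [hgdef, hchain z hz]
  have hKbot : Tendsto g atBot (nhds K) := by
    refine tendsto_const_nhds.congr' ?_
    filter_upwards [hev] with z hz
    exact (hconst z hz).symm
  have hK1 : K = c₀ * p := tendsto_nhds_unique hKbot htend_bot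
  -- limit at 0⁻ : g → 0
  have hφ0tend : Tendsto φ (nhdsWithin 0 (Iio 0)) (nhds 0) := by
    have := (hφcont 0 (self_mem_Iic)).tendsto
    rw [hφ0] at this
    exact this.mono_left (nhdsWithin_mono 0 Iio_subset_Iic_self)
  have hev0 : ∀ᶠ z in nhdsWithin (0:ℝ) (Iio 0), z ∈ Iio (0:ℝ) :=
    self_mem_nhdsWithin
  have htend_0 : Tendsto g (nhdsWithin 0 (Iio 0)) (nhds 0) := by
    have h := (hDarcy.mul hφ0tend).add (hφ0tend.const_mul c₀)
    rw [mul_zero, mul_zero, add_zero] at h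
    refine h.congr' ?_
    filter_upwards [hev0] with z hz
    have hφne : φ z ≠ 0 := (hφpos z hz).ne'
    simp only [hgdef, hchain z hz, div_mul_cancel₀ _ hφne]
  have hK0 : Tendsto g (nhdsWithin 0 (Iio 0)) (nhds K) := by
    refine tendsto_const_nhds.congr' ?_
    filter_upwards [hev0] with z hz
    exact (hconst z hz).symm
  have hK2 : K = 0 := tendsto_nhds_unique hK0 htend_0
  rw [hK1] at hK2
  nlinarith
end
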